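/- Let μ_data be a probability measure on ℝ^d, g : [0,∞) → ℝ positive bounded measurable, α ∈ ℝ, 0 < ε < T < ∞, σ_t := (∫_0^t g(η)² dη)^{1/2}, and p_r(x) := ∫ (2πr²)^{−d/2} exp(−|x−x̃|²/(2r²)) dμ_data(x̃). Then the time-integral ∫_ε^T σ_t^{−2α} g(t)² p_{σ_t}(x) dt equals (2π)^{−d/2} ∫_{ℝ^d} Φ_{σ_ε}^{σ_T}((d+2α−2)/2, |x−x̃|²/2) dμ_data(x̃) for every x ∈ ℝ^d. -/

import Mathlib

/-!
With `F t = σ_t² = ∫_0^t g²`, Fubini reduces the identity to the one-dimensional substitutions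
`v = F t` and then `u = 1/v` in the time integral of the weighted heat kernel, for each fixed `x̃`.
As `g` is only measurable, `F` need not be differentiable, so the first substitution is done
measure-theoretically: `F` is continuous, strictly increasing and `F t - F s = ∫_s^t g²`, hence it
pushes `g(t)² dt` on `(ε, T]` forward to Lebesgue measure on `(F ε, F T]`.
-/

open MeasureTheory Real Filter

/-- `Φ a b s z = ∫_{1/b²}^{1/a²} u^(s-1) e^{-z u} du`. -/
noncomputable def Phi (a b s z : ℝ) : ℝ :=
  ∫ u in (1 / b ^ 2)..(1 / a ^ 2), u ^ (s - 1) * Real.exp (-z * u)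

/-- `σ_t := (∫_0^t g²)^{1/2}`. -/
noncomputable def sigma (g : ℝ → ℝ) (t : ℝ) : ℝ :=
  Real.sqrt (∫ η in (0 : ℝ)..t, g η ^ 2)

/-- Gaussian mixture density `p_r(x)`. -/
noncomputable def pdens (d : ℕ) (μ : Measure (EuclideanSpace ℝ (Fin d)))
    (r : ℝ) (x : EuclideanSpace ℝ (Fin d)) : ℝ :=
  ∫ xt, (2 * Real.pi * r ^ 2) ^ (-(d : ℝ) / 2) *
    Real.exp (-‖x - xt‖ ^ 2 / (2 * r ^ 2)) ∂μ

open Set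

theorem MeasureTheory.LocallyIntegrable.intervalIntegrable {E : Type*} [NormedAddCommGroup E]
    {f : ℝ → E} {μ : Measure ℝ} [IsLocallyFiniteMeasure μ] (hf : LocallyIntegrable f μ)
    (a b : ℝ) : IntervalIntegrable f μ a b :=
  (hf.integrableOn_isCompact isCompact_uIcc).intervalIntegrable

section Primitive

variable {f : ℝ → ℝ} {a b c : ℝ}

theorem strictMonoOn_primitive (hf : LocallyIntegrable f) (hpos : ∀ t ∈ Ioc a b, 0 < f t) :
    StrictMonoOn (fun t => ∫ s in c..t, f s) (Icc a b) := by
  intro s hs t ht hst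
  have hst_pos : 0 < ∫ u in s..t, f u :=
    intervalIntegral.intervalIntegral_pos_of_pos_on (hf.intervalIntegrable s t)
      (fun u hu => hpos u ⟨hs.1.trans_lt hu.1, hu.2.le.trans ht.2⟩) hst
  have hsub := intervalIntegral.integral_interval_sub_left (hf.intervalIntegrable c t)
    (hf.intervalIntegrable c s)
  dsimp only
  linarith

theorem map_restrict_withDensity_primitive (hf : LocallyIntegrable f)
    (hpos : ∀ t ∈ Ioc a b, 0 < f t) (hab : a ≤ b) :
    ((volume.withDensity fun t => ENNReal.ofReal (f t)).restrict (Ioc a b)).map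
        (fun t => ∫ s in c..t, f s) =
      volume.restrict (Ioc (∫ s in c..a, f s) (∫ s in c..b, f s)) := by
  set F : ℝ → ℝ := fun t => ∫ s in c..t, f s
  have hFcont : Continuous F := intervalIntegral.continuous_primitive hf.intervalIntegrable c
  have hmono : StrictMonoOn F (Icc a b) := strictMonoOn_primitive hf hpos
  have hmeasure : ∀ τ ∈ Icc a b,
      volume.withDensity (fun t => ENNReal.ofReal (f t)) (Ioc a τ) =
        ENNReal.ofReal (F τ - F a) := by
    intro τ hτ
    rw [withDensity_apply _ measurableSet_Ioc, ← ofReal_integral_eq_lintegral_ofReal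
      ((hf.integrableOn_isCompact isCompact_Icc).mono_set Ioc_subset_Icc_self)
      ((ae_restrict_iff' measurableSet_Ioc).2 (ae_of_all _ fun t ht =>
        (hpos t ⟨ht.1, ht.2.trans hτ.2⟩).le)),
      intervalIntegral.integral_interval_sub_left (hf.intervalIntegrable c τ)
        (hf.intervalIntegrable c a), intervalIntegral.integral_of_le hτ.1]
  have : IsFiniteMeasure ((volume.withDensity fun t => ENNReal.ofReal (f t)).restrict (Ioc a b)) :=
    ⟨by rw [Measure.restrict_apply_univ, hmeasure b ⟨hab, le_rfl⟩]; exact ENNReal.ofReal_lt_top⟩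
  refine Measure.ext_of_Iic _ _ fun y => ?_
  -- `F τ` is the point of `[F a, F b]` closest to `y`
  obtain ⟨τ, hτ, hFτ⟩ : ∃ τ ∈ Icc a b, F τ = max (F a) (min y (F b)) :=
    intermediate_value_Icc hab hFcont.continuousOn
      ⟨le_max_left _ _,
        max_le (hmono.monotoneOn ⟨le_rfl, hab⟩ ⟨hab, le_rfl⟩ hab) (min_le_right _ _)⟩
  have hpre : F ⁻¹' Iic y ∩ Ioc a b = Ioc a τ := by
    ext t
    simp only [mem_inter_iff, mem_preimage, mem_Iic, mem_Ioc]
    constructor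
    · rintro ⟨hty, hat, htb⟩
      refine ⟨hat, (hmono.le_iff_le ⟨hat.le, htb⟩ hτ).1 ?_⟩
      rw [hFτ]
      exact le_max_of_le_right (le_min hty (hmono.monotoneOn ⟨hat.le, htb⟩ ⟨hab, le_rfl⟩ htb))
    · rintro ⟨hat, htτ⟩
      have hlt : F a < F t := hmono ⟨le_rfl, hab⟩ ⟨hat.le, htτ.trans hτ.2⟩ hat
      have hle : F t ≤ F τ := hmono.monotoneOn ⟨hat.le, htτ.trans hτ.2⟩ hτ htτ
      rw [hFτ, le_max_iff, le_min_iff] at hle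
      exact ⟨hle.resolve_left hlt.not_ge |>.1, hat, htτ.trans hτ.2⟩
  have himg : Iic y ∩ Ioc (F a) (F b) = Ioc (F a) (F τ) := by
    ext v
    simp only [mem_inter_iff, mem_Iic, mem_Ioc, hFτ, le_max_iff, le_min_iff]
    constructor
    · rintro ⟨hvy, hav, hvb⟩; exact ⟨hav, Or.inr ⟨hvy, hvb⟩⟩
    · rintro ⟨hav, hva | ⟨hvy, hvb⟩⟩
      · exact absurd hva hav.not_ge
      · exact ⟨hvy, hav, hvb⟩
  rw [Measure.map_apply hFcont.measurable measurableSet_Iic,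
    Measure.restrict_apply (hFcont.measurable measurableSet_Iic), hpre, hmeasure τ hτ,
    Measure.restrict_apply measurableSet_Iic, himg, Real.volume_Ioc]

theorem integral_comp_primitive_mul (hf : LocallyIntegrable f) (hpos : ∀ t ∈ Ioc a b, 0 < f t)
    (hab : a ≤ b) {ψ : ℝ → ℝ} (hψ : AEStronglyMeasurable ψ) :
    ∫ t in a..b, ψ (∫ s in c..t, f s) * f t =
      ∫ v in (∫ s in c..a, f s)..(∫ s in c..b, f s), ψ v := by
  have hFcont : Continuous fun t => ∫ s in c..t, f s :=
    intervalIntegral.continuous_primitive hf.intervalIntegrable c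
  have hmap := map_restrict_withDensity_primitive (c := c) hf hpos hab
  rw [intervalIntegral.integral_of_le hab, intervalIntegral.integral_of_le
      ((strictMonoOn_primitive hf hpos).monotoneOn ⟨le_rfl, hab⟩ ⟨hab, le_rfl⟩ hab), ← hmap,
    integral_map hFcont.aemeasurable (hmap ▸ hψ.restrict),
    restrict_withDensity measurableSet_Ioc, integral_withDensity_eq_integral_toReal_smul₀
      hf.aestronglyMeasurable.aemeasurable.restrict.ennreal_ofReal
      (ae_of_all _ fun _ => ENNReal.ofReal_lt_top)]
  refine setIntegral_congr_fun measurableSet_Ioc fun t ht => ?_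
  rw [ENNReal.toReal_ofReal (hpos t ht).le, smul_eq_mul, mul_comm]

end Primitive

theorem integral_inv_sq_mul_comp_inv (h : ℝ → ℝ) {a b : ℝ} (ha : 0 < a) (hb : 0 < b) :
    ∫ v in a..b, (v ^ 2)⁻¹ * h v⁻¹ = ∫ u in b⁻¹..a⁻¹, h u := by
  have hpos : ∀ v ∈ uIcc a b, 0 < v := fun v hv => (lt_min ha hb).trans_le hv.1
  have hsubst := intervalIntegral.integral_comp_mul_deriv_of_deriv_nonpos (g := h)
    (f' := fun v => -(v ^ 2)⁻¹) (continuousOn_inv₀.mono fun v hv => (hpos v hv).ne')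
    (fun v hv => hasDerivAt_inv (hpos v (Ioo_subset_Icc_self hv)).ne')
    (fun v _ => neg_nonpos.2 (inv_nonneg.2 (sq_nonneg v)))
  simp only [Function.comp_apply, mul_neg, intervalIntegral.integral_neg] at hsubst
  rw [intervalIntegral.integral_symm a⁻¹ b⁻¹, ← hsubst, neg_neg]
  exact intervalIntegral.integral_congr fun v _ => mul_comm _ _

/-- At `v = σ_t²` and `w = ‖x - x̃‖²`, this is `σ_t^{-2α}` times the Gaussian kernel of
`p_{σ_t}(x)`. -/
noncomputable def weightedHeatKernel (n α w v : ℝ) : ℝ :=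
  v ^ (-α) * (2 * π * v) ^ (-n / 2) * exp (-w / (2 * v))

theorem integral_weightedHeatKernel {a b : ℝ} (ha : 0 < a) (hb : 0 < b) (n α w : ℝ) :
    ∫ v in a ^ 2..b ^ 2, weightedHeatKernel n α w v =
      (2 * π) ^ (-n / 2) * Phi a b ((n + 2 * α - 2) / 2) (w / 2) := by
  set s := (n + 2 * α - 2) / 2 with hs
  have hpt : ∀ v, 0 < v → weightedHeatKernel n α w v =
      (2 * π) ^ (-n / 2) * ((v ^ 2)⁻¹ * (v⁻¹ ^ (s - 1) * exp (-(w / 2) * v⁻¹))) := by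
    intro v hv
    have hpow : v ^ (-α) * v ^ (-n / 2) = (v ^ 2)⁻¹ * v⁻¹ ^ (s - 1) := by
      rw [← rpow_add hv, inv_rpow hv.le, ← rpow_neg hv.le, ← rpow_natCast, ← rpow_neg hv.le,
        ← rpow_add hv, hs]
      ring_nf
    rw [weightedHeatKernel, mul_rpow (by positivity) hv.le,
      show -(w / 2) * v⁻¹ = -w / (2 * v) by field_simp]
    linear_combination (2 * π) ^ (-n / 2) * exp (-w / (2 * v)) * hpow
  rw [intervalIntegral.integral_congr fun v hv =>
      hpt v ((lt_min (by positivity) (by positivity)).trans_le hv.1),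
    intervalIntegral.integral_const_mul,
    integral_inv_sq_mul_comp_inv (fun u => u ^ (s - 1) * exp (-(w / 2) * u)) (by positivity)
      (by positivity), Phi, one_div, one_div]

theorem measurable_weightedHeatKernel (n α w : ℝ) : Measurable (weightedHeatKernel n α w) := by
  unfold weightedHeatKernel
  fun_prop

theorem integrable_weightedHeatKernel_mul {Y : Type*} [MeasurableSpace Y] {ν : Measure Y}
    [IsFiniteMeasure ν] {F f : ℝ → ℝ} {w : Y → ℝ} {a b : ℝ} (hF : Continuous F)
    (hFpos : ∀ t ∈ Icc a b, 0 < F t) (hf : IntegrableOn f (Icc a b)) (hw : Measurable w)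
    (hw0 : ∀ y, 0 ≤ w y) (n α : ℝ) :
    Integrable (fun p : ℝ × Y => weightedHeatKernel n α (w p.2) (F p.1) * f p.1)
      ((volume.restrict (Ioc a b)).prod ν) := by
  have hcont : ContinuousOn (fun t => F t ^ (-α) * (2 * π * F t) ^ (-n / 2)) (Icc a b) :=
    fun t ht => ((hF.continuousAt.rpow_const (Or.inl (hFpos t ht).ne')).mul
      ((continuousAt_const.mul hF.continuousAt).rpow_const
        (Or.inl (mul_pos two_pi_pos (hFpos t ht)).ne'))).continuousWithinAt
  have hφ := ((hf.continuousOn_mul hcont isCompact_Icc).mono_set Ioc_subset_Icc_self).comp_fst ν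
  have hexp : ∀ᵐ p : ℝ × Y ∂(volume.restrict (Ioc a b)).prod ν,
      ‖exp (-w p.2 / (2 * F p.1))‖ ≤ 1 := by
    filter_upwards [Measure.quasiMeasurePreserving_fst.ae (ae_restrict_mem measurableSet_Ioc)]
      with p hp
    have := hFpos p.1 (Ioc_subset_Icc_self hp)
    rw [norm_of_nonneg (exp_nonneg _), exp_le_one_iff]
    exact div_nonpos_of_nonpos_of_nonneg (neg_nonpos.2 (hw0 p.2)) (by positivity)
  have hmeas : Measurable fun p : ℝ × Y => exp (-w p.2 / (2 * F p.1)) := by fun_prop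
  refine (hφ.bdd_mul hmeas.aestronglyMeasurable hexp).congr (ae_of_all _ fun p => ?_)
  simp only [weightedHeatKernel]
  ring

theorem sq_sigma (g : ℝ → ℝ) {t : ℝ} (ht : 0 ≤ t) : sigma g t ^ 2 = ∫ η in (0 : ℝ)..t, g η ^ 2 :=
  sq_sqrt (intervalIntegral.integral_nonneg ht fun _ _ => sq_nonneg _)

theorem sigma_rpow_neg_two_mul (g : ℝ → ℝ) {t : ℝ} (ht : 0 ≤ t) (α : ℝ) :
    sigma g t ^ (-(2 : ℝ) * α) = (∫ η in (0 : ℝ)..t, g η ^ 2) ^ (-α) := by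
  rw [← sq_sigma g ht, ← rpow_natCast, ← rpow_mul (x := sigma g t) (sqrt_nonneg _)]
  congr 1
  push_cast
  ring

theorem intervalIntegral_sq_pos_of_ne_zero {g : ℝ → ℝ} (hg2 : LocallyIntegrable fun t => g t ^ 2)
    (hg : ∀ t, g t ≠ 0) {t : ℝ} (ht : 0 < t) : 0 < ∫ η in (0 : ℝ)..t, g η ^ 2 :=
  intervalIntegral.intervalIntegral_pos_of_pos_on (hg2.intervalIntegrable 0 t)
    (fun u _ => sq_pos_of_ne_zero (hg u)) ht

theorem rpow_sigma_mul_pdens_eq_integral {d : ℕ} (μ : Measure (EuclideanSpace ℝ (Fin d)))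
    (g : ℝ → ℝ) {t : ℝ} (ht : 0 ≤ t) (α : ℝ) (x : EuclideanSpace ℝ (Fin d)) :
    sigma g t ^ (-(2 : ℝ) * α) * g t ^ 2 * pdens d μ (sigma g t) x =
      ∫ xt, weightedHeatKernel d α (‖x - xt‖ ^ 2) (∫ η in (0 : ℝ)..t, g η ^ 2) * g t ^ 2 ∂μ := by
  rw [pdens, sq_sigma g ht, sigma_rpow_neg_two_mul g ht, ← integral_const_mul]
  congr 1
  funext xt
  simp only [weightedHeatKernel]
  ring

theorem integral_weightedHeatKernel_primitive {g : ℝ → ℝ}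
    (hg2 : LocallyIntegrable fun t => g t ^ 2) (hg : ∀ t, g t ≠ 0) {ε T : ℝ} (hε : 0 < ε)
    (hεT : ε ≤ T) (n α w : ℝ) :
    ∫ t in ε..T, weightedHeatKernel n α w (∫ η in (0 : ℝ)..t, g η ^ 2) * g t ^ 2 =
      (2 * π) ^ (-n / 2) * Phi (sigma g ε) (sigma g T) ((n + 2 * α - 2) / 2) (w / 2) := by
  rw [integral_comp_primitive_mul hg2 (fun t _ => sq_pos_of_ne_zero (hg t)) hεT
      (measurable_weightedHeatKernel n α w).aestronglyMeasurable,
    ← sq_sigma g hε.le, ← sq_sigma g (hε.trans_le hεT).le]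
  exact integral_weightedHeatKernel (sqrt_pos.2 (intervalIntegral_sq_pos_of_ne_zero hg2 hg hε))
    (sqrt_pos.2 (intervalIntegral_sq_pos_of_ne_zero hg2 hg (hε.trans_le hεT))) n α w

/-- Time-integral identity:
`∫_ε^T σ_t^{-2α} g(t)² p_{σ_t}(x) dt = (2π)^{-d/2} ∫ Φ_{σ_ε}^{σ_T}((d+2α-2)/2, |x-x̃|²/2) dμ(x̃)`. -/
theorem time_integral_identity (d : ℕ) (μ : Measure (EuclideanSpace ℝ (Fin d)))
    [IsProbabilityMeasure μ] (g : ℝ → ℝ) (hg : Measurable g) (hgpos : ∀ t, 0 < g t)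
    (hgbdd : ∃ M : ℝ, ∀ t, g t ≤ M) (α ε T : ℝ) (hε : 0 < ε) (hεT : ε < T)
    (x : EuclideanSpace ℝ (Fin d)) :
    (∫ t in ε..T, (sigma g t) ^ (-(2 : ℝ) * α) * g t ^ 2 * pdens d μ (sigma g t) x)
      = (2 * Real.pi) ^ (-(d : ℝ) / 2) *
        ∫ xt, Phi (sigma g ε) (sigma g T) (((d : ℝ) + 2 * α - 2) / 2) (‖x - xt‖ ^ 2 / 2) ∂μ := by
  obtain ⟨M, hM⟩ := hgbdd
  have hg0 : ∀ t, g t ≠ 0 := fun t => (hgpos t).ne'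
  have hg2 : LocallyIntegrable fun t => g t ^ 2 :=
    (memLp_top_of_bound (hg.pow_const 2).aestronglyMeasurable (M ^ 2) (ae_of_all _ fun t => by
      rw [norm_of_nonneg (sq_nonneg _)]
      exact pow_le_pow_left₀ (hgpos t).le (hM t) 2)).locallyIntegrable le_top
  have hint : Integrable (fun p : ℝ × EuclideanSpace ℝ (Fin d) =>
      weightedHeatKernel d α (‖x - p.2‖ ^ 2) (∫ η in (0 : ℝ)..p.1, g η ^ 2) * g p.1 ^ 2)
      ((volume.restrict (Ioc ε T)).prod μ) :=
    integrable_weightedHeatKernel_mul (F := fun t => ∫ η in (0 : ℝ)..t, g η ^ 2)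
      (w := fun xt => ‖x - xt‖ ^ 2) (intervalIntegral.continuous_primitive hg2.intervalIntegrable 0)
      (fun t ht => intervalIntegral_sq_pos_of_ne_zero hg2 hg0 (hε.trans_le ht.1))
      (hg2.integrableOn_isCompact isCompact_Icc) (by fun_prop) (fun _ => sq_nonneg _) d α
  calc (∫ t in ε..T, sigma g t ^ (-(2 : ℝ) * α) * g t ^ 2 * pdens d μ (sigma g t) x)
      = ∫ t in ε..T, ∫ xt, weightedHeatKernel d α (‖x - xt‖ ^ 2)
          (∫ η in (0 : ℝ)..t, g η ^ 2) * g t ^ 2 ∂μ :=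
        intervalIntegral.integral_congr fun t ht => rpow_sigma_mul_pdens_eq_integral μ g
          (hε.le.trans (by rw [uIcc_of_le hεT.le] at ht; exact ht.1)) α x
    _ = ∫ xt, (∫ t in ε..T, weightedHeatKernel d α (‖x - xt‖ ^ 2)
          (∫ η in (0 : ℝ)..t, g η ^ 2) * g t ^ 2) ∂μ := by
        simp only [intervalIntegral.integral_of_le hεT.le]
        exact integral_integral_swap hint
    _ = ∫ xt, (2 * π) ^ (-(d : ℝ) / 2) *
          Phi (sigma g ε) (sigma g T) (((d : ℝ) + 2 * α - 2) / 2) (‖x - xt‖ ^ 2 / 2) ∂μ :=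
        integral_congr_ae (ae_of_all _ fun xt =>
          integral_weightedHeatKernel_primitive hg2 hg0 hε hεT.le _ _ _)
    _ = _ := integral_const_mul _ _
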